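/- Let f : ℕ × ℕ → ℝ satisfy f(k,ℓ) = f(k+1,ℓ−1) + f(k,ℓ−1) for all ℓ ≥ 1. Then for sets S of n ≥ d+1 points in general position in ℝ^d, the value F(S) = Σ_{k≥d+1} Σ_{ℓ≥0} f(k,ℓ)·X_{k,ℓ}(S) depends only on n and d, not on the particular point set S. -/

import Mathlib

/-!
Unfolding the recurrence gives `f k ℓ = ∑_{A ⊆ P} f (k + |A|) 0` for every `ℓ`-element
set `P`. Taking for `P` the points of `S` inside `conv T`, the sum `F(S)` becomes a sum of
`f |T ∪ A| 0` over the pairs `(T, A)` with `T ⊆ S` in convex position, `|T| ≥ d + 1`, and `A` a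
set of points of `S` interior to `conv T`. In general position `(T, A) ↦ T ∪ A` is a bijection
onto the subsets `U ⊆ S` with `|U| ≥ d + 1`, inverted by splitting `U` into the vertices of
`conv U` and the rest: a non-vertex of `U` on the boundary of `conv U` would lie in the affine
span of the at most `d` points of `U` on a supporting hyperplane. Hence
`F(S) = ∑_{m ≥ d + 1} (n choose m) f m 0`.
-/

open Finset
open scoped Classical

/-- general position in ℝ^d: no hyperplane contains more than d points,
i.e. every (d+1)-point subset affinely spans the whole space -/
def GenPosD (d : ℕ) (S : Finset (Fin d → ℝ)) : Prop :=
  ∀ T ⊆ S, T.card = d + 1 → affineSpan ℝ (T : Set (Fin d → ℝ)) = ⊤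

def ConvexPosD (d : ℕ) (T : Finset (Fin d → ℝ)) : Prop :=
  ∀ p ∈ T, p ∉ convexHull ℝ ((T : Set (Fin d → ℝ)) \ {p})

/-- number of convex k-vertex polytopes spanned by S with exactly l points of S inside -/
noncomputable def XD (d : ℕ) (S : Finset (Fin d → ℝ)) (k l : ℕ) : ℕ :=
  ((Finset.powersetCard k S).filter (fun T => ConvexPosD d T ∧
    (S.filter (fun p => p ∈ interior (convexHull ℝ (T : Set (Fin d → ℝ))))).card = l)).card

/-- number of extreme points (convex hull vertices) of S -/
noncomputable def hullVertsD (d : ℕ) (S : Finset (Fin d → ℝ)) : ℕ :=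
  (S.filter (fun p => p ∉ convexHull ℝ ((S : Set (Fin d → ℝ)) \ {p}))).card

theorem Finset.sum_mul_card_filter_eq {ι κ : Type*} {s : Finset ι} {t : Finset κ} {g : ι → κ}
    (h : ∀ i ∈ s, g i ∈ t) (F : κ → ℝ) :
    ∑ b ∈ t, F b * #(s.filter (g · = b)) = ∑ i ∈ s, F (g i) := by
  rw [← sum_fiberwise_of_maps_to h]
  refine sum_congr rfl fun b _ => ?_
  rw [sum_congr rfl fun i hi => congrArg F (mem_filter.1 hi).2, sum_const, nsmul_eq_mul, mul_comm]

theorem Finset.eq_of_card_eq_of_subsingleton {α : Type*} [Subsingleton α] {s t : Finset α}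
    (h : #s = #t) : s = t := by
  refine eq_of_subset_of_card_le (fun a ha => ?_) h.ge
  obtain ⟨b, hb⟩ := card_pos.1 (h ▸ card_pos.2 ⟨a, ha⟩)
  rwa [Subsingleton.elim a b]

theorem apply_card_eq_sum_powerset {α : Type*} {f : ℕ → ℕ → ℝ}
    (hf : ∀ k l : ℕ, f k (l + 1) = f (k + 1) l + f k l) (P : Finset α) (k : ℕ) :
    f k #P = ∑ A ∈ P.powerset, f (k + #A) 0 := by
  induction P using Finset.induction_on generalizing k with
  | empty => simp
  | insert a P ha ih =>
    rw [card_insert_of_notMem ha, hf, ih, ih, sum_powerset_insert ha, add_comm]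
    congr 1
    refine sum_congr rfl fun A hA => ?_
    rw [card_insert_of_notMem fun h => ha (mem_powerset.1 hA h), add_right_comm, add_assoc]

theorem Finset.mem_convexHull_filter_eq_of_le {E : Type*} [AddCommGroup E] [Module ℝ E]
    {s : Finset E} (g : E →ₗ[ℝ] ℝ) {c : ℝ} {x : E} (hs : ∀ y ∈ s, g y ≤ c)
    (hx : x ∈ convexHull ℝ (s : Set E)) (hcx : c ≤ g x) :
    x ∈ convexHull ℝ (s.filter (g · = c) : Set E) := by
  obtain ⟨w, hw0, hw1, rfl⟩ := Finset.mem_convexHull'.1 hx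
  have hgap_nonneg : ∀ y ∈ s, 0 ≤ w y * (c - g y) :=
    fun y hy => mul_nonneg (hw0 y hy) (sub_nonneg.2 (hs y hy))
  have hgap : ∑ y ∈ s, w y * (c - g y) = 0 := by
    refine le_antisymm ?_ (sum_nonneg hgap_nonneg)
    simp only [mul_sub, sum_sub_distrib, ← sum_mul, hw1, map_sum, map_smul, smul_eq_mul] at hcx ⊢
    linarith
  have hw : ∀ y ∈ s, w y ≠ 0 → g y = c := fun y hy hwy => by
    have := (sum_eq_zero_iff_of_nonneg hgap_nonneg).1 hgap y hy
    rcases mul_eq_zero.1 this with h | h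
    · exact absurd h hwy
    · linarith
  refine Finset.mem_convexHull'.2 ⟨w, fun y hy => hw0 y (mem_filter.1 hy).1, ?_, ?_⟩
  · rw [sum_filter_of_ne fun y hy hwy => hw y hy hwy, hw1]
  · exact sum_filter_of_ne fun y hy hwy => hw y hy fun h => hwy (by simp [h])

section Vertices

variable {E : Type*} [NormedAddCommGroup E] [NormedSpace ℝ E]

noncomputable def hullVertices (U : Finset E) : Finset E :=
  U.filter fun p => p ∉ convexHull ℝ ((U : Set E) \ {p})

theorem convexHull_extremePoints_convexHull (U : Finset E) :
    convexHull ℝ ((convexHull ℝ (U : Set E)).extremePoints ℝ) = convexHull ℝ (U : Set E) := by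
  have hext : ((convexHull ℝ (U : Set E)).extremePoints ℝ).Finite :=
    U.finite_toSet.subset extremePoints_convexHull_subset
  rw [← (hext.isCompact_convexHull (𝕜 := ℝ)).isClosed.closure_eq]
  exact closure_convexHull_extremePoints (U.finite_toSet.isCompact_convexHull (𝕜 := ℝ))
    (convex_convexHull ℝ _)

theorem coe_hullVertices (U : Finset E) :
    (hullVertices U : Set E) = (convexHull ℝ (U : Set E)).extremePoints ℝ := by
  ext p
  simp only [hullVertices, coe_filter, Set.mem_ofPred_eq]
  constructor
  · rintro ⟨hpU, hp⟩
    by_contra hext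
    have hsub : (convexHull ℝ (U : Set E)).extremePoints ℝ ⊆ (U : Set E) \ {p} :=
      fun x hx => ⟨extremePoints_convexHull_subset hx, fun h => hext (h ▸ hx)⟩
    have hpU' := subset_convexHull ℝ _ (mem_coe.2 hpU)
    rw [← convexHull_extremePoints_convexHull] at hpU'
    exact hp (convexHull_mono hsub hpU')
  · intro hp
    refine ⟨extremePoints_convexHull_subset hp, fun h => ?_⟩
    rw [(convex_convexHull ℝ _).mem_extremePoints_iff_mem_sdiff_convexHull_sdiff] at hp
    exact hp.2 (convexHull_mono (Set.sdiff_subset_sdiff_left (subset_convexHull ℝ _)) h)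

theorem convexHull_hullVertices (U : Finset E) :
    convexHull ℝ (hullVertices U : Set E) = convexHull ℝ (U : Set E) := by
  rw [coe_hullVertices, convexHull_extremePoints_convexHull]

theorem hullVertices_hullVertices (U : Finset E) : hullVertices (hullVertices U) = hullVertices U :=
  coe_injective <| by rw [coe_hullVertices, convexHull_hullVertices, coe_hullVertices]

theorem hullVertices_union_of_subset_convexHull [DecidableEq E] {T A : Finset E}
    (hT : hullVertices T = T) (hA : (A : Set E) ⊆ convexHull ℝ (T : Set E)) :
    hullVertices (T ∪ A) = T := by
  have hhull : convexHull ℝ ((T ∪ A : Finset E) : Set E) = convexHull ℝ (T : Set E) := by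
    rw [coe_union]
    exact (convexHull_min (Set.union_subset (subset_convexHull ℝ _) hA)
      (convex_convexHull ℝ _)).antisymm (convexHull_mono Set.subset_union_left)
  exact coe_injective <| by rw [coe_hullVertices, hhull, ← coe_hullVertices, hT]

theorem disjoint_interior_convexHull [Nontrivial E] {T : Finset E} (hT : hullVertices T = T) :
    Disjoint (T : Set E) (interior (convexHull ℝ (T : Set E))) := by
  have h := disjoint_interior_extremePoints (convexHull ℝ (T : Set E))
  rw [← coe_hullVertices, hT] at h
  exact h.symm

theorem add_one_le_card_of_affineSpan_eq_top [FiniteDimensional ℝ E] {V : Finset E}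
    (hV : affineSpan ℝ (V : Set E) = ⊤) : Module.finrank ℝ E + 1 ≤ #V := by
  have : Nonempty ↥(V : Set E) :=
    (AffineSubspace.nonempty_of_affineSpan_eq_top ℝ E E hV).to_subtype
  have := finrank_vectorSpan_range_add_one_le ℝ ((↑) : ↥(V : Set E) → E)
  rw [Subtype.range_coe, AffineSubspace.vectorSpan_eq_top_of_affineSpan_eq_top ℝ E E hV,
    finrank_top] at this
  simpa using this

end Vertices

namespace GenPosD

variable {d : ℕ} {S T : Finset (Fin d → ℝ)}

theorem affineSpan_eq_top (hS : GenPosD d S) (hTS : T ⊆ S) (hT : d + 1 ≤ #T) :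
    affineSpan ℝ (T : Set (Fin d → ℝ)) = ⊤ := by
  obtain ⟨V, hVT, hV⟩ := exists_subset_card_eq hT
  exact top_le_iff.1 <|
    (hS V (hVT.trans hTS) hV).symm.le.trans (affineSpan_mono ℝ (coe_subset.2 hVT))

theorem notMem_affineSpan (hS : GenPosD d S) (hdS : d + 1 ≤ #S) {W : Finset (Fin d → ℝ)}
    (hWS : W ⊆ S) (hW : #W ≤ d) {p : Fin d → ℝ} (hpS : p ∈ S) (hpW : p ∉ W) :
    p ∉ affineSpan ℝ (W : Set (Fin d → ℝ)) := by
  -- Complete `insert p W` to `d + 1` points `V`: then the `d` points `V.erase p` would span `ℝ^d`.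
  intro hp
  obtain ⟨V, hpWV, hVS, hV⟩ := exists_subsuperset_card_eq (insert_subset hpS hWS)
    (by rw [card_insert_of_notMem hpW]; omega) hdS
  have hspan : affineSpan ℝ ((V.erase p : Finset _) : Set (Fin d → ℝ)) = ⊤ := by
    refine top_le_iff.1 <| (hS V hVS hV).symm.le.trans (affineSpan_le.2 fun v hv => ?_)
    by_cases hvp : v = p
    · subst hvp
      refine affineSpan_mono ℝ (coe_subset.2 fun w hw => mem_erase.2 ⟨?_, ?_⟩) hp
      · rintro rfl; exact hpW hw
      · exact hpWV (mem_insert_of_mem hw)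
    · exact subset_affineSpan ℝ _ (mem_erase.2 ⟨hvp, hv⟩)
  have := add_one_le_card_of_affineSpan_eq_top hspan
  rw [card_erase_of_mem (hpWV (mem_insert_self p W)), hV, Module.finrank_fin_fun] at this
  omega

theorem mem_interior_convexHull (hS : GenPosD d S) (hTS : T ⊆ S) (hT : d + 1 ≤ #T)
    {p : Fin d → ℝ} (hpS : p ∈ S) (hpT : p ∉ T) (hp : p ∈ convexHull ℝ (T : Set (Fin d → ℝ))) :
    p ∈ interior (convexHull ℝ (T : Set (Fin d → ℝ))) := by
  have hspan := hS.affineSpan_eq_top hTS hT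
  have hint : (interior (convexHull ℝ (T : Set (Fin d → ℝ)))).Nonempty := by
    rwa [(convex_convexHull ℝ _).interior_nonempty_iff_affineSpan_eq_top, affineSpan_convexHull]
  -- Otherwise a supporting hyperplane `g = c` through `p` cuts out a face `F ⊆ T` with
  -- `p ∈ conv F`; general position forces `#F ≤ d`, and then `p ∉ affineSpan F`.
  by_contra hpi
  obtain ⟨g, c, hg0, hgT, hgp⟩ := geometric_hahn_banach_of_nonempty_interior
    (convex_convexHull ℝ _) (convex_singleton p) (Set.disjoint_singleton_right.2 hpi) hint
    (Set.singleton_nonempty p)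
  have hpF := mem_convexHull_filter_eq_of_le (g : (Fin d → ℝ) →ₗ[ℝ] ℝ)
    (fun y hy => hgT y (subset_convexHull ℝ _ hy)) hp (hgp p rfl)
  generalize hF_def : T.filter ((g : (Fin d → ℝ) →ₗ[ℝ] ℝ) · = c) = F at hpF
  have hFT : F ⊆ T := hF_def ▸ filter_subset _ _
  have hFS : F ⊆ S := hFT.trans hTS
  have hgF : ∀ y ∈ F, g y = c := fun y hy => by
    rw [← hF_def] at hy; exact (mem_filter.1 hy).2
  have hF : #F ≤ d := by
    by_contra! hF
    have hconst : (g : (Fin d → ℝ) →ₗ[ℝ] ℝ).toAffineMap = AffineMap.const ℝ _ c :=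
      AffineMap.ext_on (hS.affineSpan_eq_top hFS hF) hgF
    apply hg0
    ext x
    have h0 := congrArg (· 0) hconst
    have hx := congrArg (· x) hconst
    simp only [LinearMap.coe_toAffineMap, map_zero, AffineMap.const_apply] at h0 hx
    exact hx.trans h0.symm
  exact hS.notMem_affineSpan ((card_le_card hTS).trans' hT) hFS hF hpS
    (fun h => hpT (hFT h)) (convexHull_subset_affineSpan _ hpF)

end GenPosD

noncomputable def interiorPoints {d : ℕ} (S T : Finset (Fin d → ℝ)) : Finset (Fin d → ℝ) :=
  S.filter fun p => p ∈ interior (convexHull ℝ (T : Set (Fin d → ℝ)))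

noncomputable def convexPositionSubsets (d : ℕ) (S : Finset (Fin d → ℝ)) :
    Finset (Finset (Fin d → ℝ)) :=
  S.powerset.filter fun T => ConvexPosD d T ∧ d + 1 ≤ #T

section Counting

variable {d : ℕ} {S T A : Finset (Fin d → ℝ)}

theorem mem_convexPositionSubsets :
    T ∈ convexPositionSubsets d S ↔ T ⊆ S ∧ ConvexPosD d T ∧ d + 1 ≤ #T := by
  rw [convexPositionSubsets, mem_filter, mem_powerset]

theorem subset_interiorPoints_iff :
    A ⊆ interiorPoints S T ↔
      A ⊆ S ∧ (A : Set (Fin d → ℝ)) ⊆ interior (convexHull ℝ (T : Set (Fin d → ℝ))) := by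
  simp [interiorPoints, subset_iff, Set.subset_def, forall_and]

theorem convexPosD_iff_hullVertices_eq : ConvexPosD d T ↔ hullVertices T = T :=
  filter_eq_self.symm

theorem sum_XD_eq_sum_convexPositionSubsets (f : ℕ → ℕ → ℝ) (S : Finset (Fin d → ℝ)) :
    ∑ k ∈ Icc (d + 1) #S, ∑ l ∈ range (#S + 1), f k l * XD d S k l =
      ∑ T ∈ convexPositionSubsets d S, f #T #(interiorPoints S T) := by
  have hmaps : ∀ T ∈ convexPositionSubsets d S,
      (#T, #(interiorPoints S T)) ∈ Icc (d + 1) #S ×ˢ range (#S + 1) := by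
    intro T hT
    obtain ⟨hTS, -, hT⟩ := mem_convexPositionSubsets.1 hT
    simp only [mem_product, mem_Icc, mem_range, Nat.lt_succ_iff]
    exact ⟨⟨hT, card_le_card hTS⟩, card_le_card (filter_subset _ _)⟩
  rw [← sum_product', ← sum_mul_card_filter_eq hmaps (fun b => f b.1 b.2)]
  refine sum_congr rfl fun ⟨k, l⟩ hkl => ?_
  simp only [mem_product, mem_Icc] at hkl
  rw [XD]
  congr 2
  refine congrArg card (ext fun T => ?_)
  simp only [mem_filter, mem_powersetCard, mem_convexPositionSubsets, interiorPoints, Prod.ext_iff]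
  constructor
  · rintro ⟨⟨hTS, rfl⟩, hT, hl⟩
    exact ⟨⟨hTS, hT, hkl.1.1⟩, rfl, hl⟩
  · rintro ⟨⟨hTS, hT, -⟩, rfl, hl⟩
    exact ⟨⟨hTS, rfl⟩, hT, hl⟩

theorem GenPosD.hullVertices_mem_convexPositionSubsets (hS : GenPosD d S) {U : Finset (Fin d → ℝ)}
    (hUS : U ⊆ S) (hU : d + 1 ≤ #U) : hullVertices U ∈ convexPositionSubsets d S := by
  have hspan : affineSpan ℝ (hullVertices U : Set (Fin d → ℝ)) = ⊤ := by
    rw [← affineSpan_convexHull, convexHull_hullVertices, affineSpan_convexHull]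
    exact hS.affineSpan_eq_top hUS hU
  have hcard := add_one_le_card_of_affineSpan_eq_top hspan
  rw [Module.finrank_fin_fun] at hcard
  rw [mem_convexPositionSubsets, convexPosD_iff_hullVertices_eq]
  exact ⟨(filter_subset _ _).trans hUS, hullVertices_hullVertices U, hcard⟩

theorem GenPosD.sdiff_hullVertices_subset_interiorPoints (hS : GenPosD d S)
    {U : Finset (Fin d → ℝ)} (hUS : U ⊆ S) (hU : d + 1 ≤ #U) :
    U \ hullVertices U ⊆ interiorPoints S (hullVertices U) := by
  obtain ⟨hVS, -, hV⟩ :=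
    mem_convexPositionSubsets.1 (hS.hullVertices_mem_convexPositionSubsets hUS hU)
  refine subset_interiorPoints_iff.2 ⟨sdiff_subset.trans hUS, fun p hp => ?_⟩
  obtain ⟨hpU, hpV⟩ := mem_sdiff.1 hp
  refine hS.mem_interior_convexHull hVS hV (hUS hpU) hpV ?_
  rw [convexHull_hullVertices]
  exact subset_convexHull ℝ _ (mem_coe.2 hpU)

theorem hullVertices_union_interiorPoints [NeZero d] (hT : ConvexPosD d T)
    (hA : A ⊆ interiorPoints S T) : hullVertices (T ∪ A) = T ∧ Disjoint T A := by
  rw [convexPosD_iff_hullVertices_eq] at hT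
  have hA' := (subset_interiorPoints_iff.1 hA).2
  exact ⟨hullVertices_union_of_subset_convexHull hT (hA'.trans interior_subset),
    disjoint_coe.1 ((disjoint_interior_convexHull hT).mono_right hA')⟩

theorem GenPosD.sum_convexPositionSubsets_sum_powerset [NeZero d] (hS : GenPosD d S)
    (g : ℕ → ℝ) :
    ∑ T ∈ convexPositionSubsets d S, ∑ A ∈ (interiorPoints S T).powerset, g (#T + #A) =
      ∑ U ∈ S.powerset.filter (d + 1 ≤ #·), g #U := by
  rw [sum_sigma']
  refine sum_bij' (fun x _ => x.1 ∪ x.2) (fun U _ => ⟨hullVertices U, U \ hullVertices U⟩)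
    ?_ ?_ ?_ ?_ ?_
  all_goals simp only [mem_sigma, mem_convexPositionSubsets, mem_filter, mem_powerset]
  · rintro ⟨T, A⟩ ⟨⟨hTS, -, hT⟩, hA⟩
    exact ⟨union_subset hTS (hA.trans (filter_subset _ _)),
      hT.trans (card_le_card subset_union_left)⟩
  · rintro U ⟨hUS, hU⟩
    exact ⟨mem_convexPositionSubsets.1 (hS.hullVertices_mem_convexPositionSubsets hUS hU),
      hS.sdiff_hullVertices_subset_interiorPoints hUS hU⟩
  · rintro ⟨T, A⟩ ⟨⟨-, hT, -⟩, hA⟩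
    obtain ⟨hV, hdisj⟩ := hullVertices_union_interiorPoints hT hA
    simp only [hV, union_sdiff_cancel_left hdisj]
  · rintro U -
    exact union_sdiff_of_subset (filter_subset _ _)
  · rintro ⟨T, A⟩ ⟨⟨-, hT, -⟩, hA⟩
    rw [card_union_of_disjoint (hullVertices_union_interiorPoints hT hA).2]

theorem GenPosD.sum_XD_eq_sum_range_choose [NeZero d] {f : ℕ → ℕ → ℝ}
    (hf : ∀ k l : ℕ, f k (l + 1) = f (k + 1) l + f k l) (hS : GenPosD d S) :
    ∑ k ∈ Icc (d + 1) #S, ∑ l ∈ range (#S + 1), f k l * XD d S k l =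
      ∑ m ∈ range (#S + 1), (#S).choose m • if d + 1 ≤ m then f m 0 else 0 := by
  rw [sum_XD_eq_sum_convexPositionSubsets, ← sum_powerset_apply_card, ← sum_filter,
    ← hS.sum_convexPositionSubsets_sum_powerset (fun m => f m 0)]
  exact sum_congr rfl fun T _ => apply_card_eq_sum_powerset hf _ _

end Counting

theorem stmt15_general (d : ℕ) (f : ℕ → ℕ → ℝ)
    (hf : ∀ k l : ℕ, f k (l + 1) = f (k + 1) l + f k l)
    (S₁ S₂ : Finset (Fin d → ℝ)) (h₁ : GenPosD d S₁) (h₂ : GenPosD d S₂)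
    (hcard : S₁.card = S₂.card) :
    ∑ k ∈ Finset.Icc (d + 1) S₁.card, ∑ l ∈ Finset.range (S₁.card + 1),
      f k l * XD d S₁ k l =
    ∑ k ∈ Finset.Icc (d + 1) S₂.card, ∑ l ∈ Finset.range (S₂.card + 1),
      f k l * XD d S₂ k l := by
  -- In `ℝ⁰` a point is interior to its own hull, but a finset of `ℝ⁰` is determined by its size.
  rcases Nat.eq_zero_or_pos d with rfl | hd
  · rw [eq_of_card_eq_of_subsingleton hcard]
  · have : NeZero d := ⟨hd.ne'⟩
    rw [h₁.sum_XD_eq_sum_range_choose hf, h₂.sum_XD_eq_sum_range_choose hf, hcard]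

theorem stmt15 (d : ℕ) (f : ℕ → ℕ → ℝ)
    (hf : ∀ k l : ℕ, f k (l + 1) = f (k + 1) l + f k l)
    (S₁ S₂ : Finset (Fin d → ℝ)) (h₁ : GenPosD d S₁) (h₂ : GenPosD d S₂)
    (hn₁ : d + 1 ≤ S₁.card) (hn₂ : d + 1 ≤ S₂.card) (hcard : S₁.card = S₂.card) :
    ∑ k ∈ Finset.Icc (d + 1) S₁.card, ∑ l ∈ Finset.range (S₁.card + 1),
      f k l * XD d S₁ k l =
    ∑ k ∈ Finset.Icc (d + 1) S₂.card, ∑ l ∈ Finset.range (S₂.card + 1),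
      f k l * XD d S₂ k l :=
  stmt15_general d f hf S₁ S₂ h₁ h₂ hcard
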